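/- Let t₁, t₂, t₃, Z ∈ ℂ satisfy Z⁴ + t₃Z + t₂ = 0, and define y₁ = (128000/19683)(12000t₁³ − 3360t₁t₂²Z² − 3390t₁t₂t₃² − 3120t₁t₂t₃Z³ + 810t₁t₃³Z + 4112t₂³t₃ + 2176t₂³Z³ − 2176t₂²t₃²Z − 119t₂t₃³Z² + 200t₃⁵ + 119t₃⁴Z³), y₂ = (3200/729)(180t₁t₂ − 32t₂²Z − 22t₂t₃Z² − 5t₃³ − 5t₃²Z³), y₃ = (20/3)t₃. Then: (i) t₃ = (3/20)y₃ and t₂ = −(Z/20)(20Z³ + 3y₃); (ii) if Z(20Z³ + 3y₃) ≠ 0, then t₁ = −(1/(28800·Z·(20Z³ + 3y₃)))·(102400Z⁹ + 20160y₃Z⁶ + 1080y₃²Z³ + 729y₂ + 54y₃³), and Z satisfies 2²⁹5¹¹Z²⁷ + 2²⁷3³5¹⁰y₃Z²⁴ + 2²²3⁴5⁸·151·y₃²Z²¹ + 2¹⁸3⁴5⁷(2²·7²·19·y₃³ − 3³y₂)Z¹⁸ + 2¹³3⁶5⁵(60089y₃⁴ − 2²·3³·11·y₂y₃)Z¹⁵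 + 2¹⁰3⁷5³(5²·2·11·19·41·y₃⁵ − 3³·263·y₂y₃² + 2²·3⁷y₁)Z¹² + 2⁹3⁷5²(2³·3⁶y₂² + 3⁹·2·y₁y₃ + 3³·19·41·y₂y₃³ + 5²·2·4987·y₃⁶)Z⁹ + 2⁶3⁹·5·(3⁶·7·y₂²y₃ + 2²·3⁸y₁y₃² + 2⁵·3³·23·y₂y₃⁴ + 2²·5³·53·y₃⁷)Z⁶ + 2³3¹⁰(3⁶·5·y₂²y₃² + 2³·3⁷y₁y₃³ + 2²·3³·131·y₂y₃⁵ − 2²·5²·7·y₃⁸)Z³ + 3⁹(3⁹y₂³ + 3⁷·2·y₂²y₃³ + 2²·3⁴·y₂y₃⁶ + 2³y₃⁹) = 0. -/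

import Mathlib

noncomputable section

/-- The `H₃` basic invariant `y₁` in the flat coordinates of `(H₃)′`. -/
def y1H31 (t₁ t₂ t₃ Z : ℂ) : ℂ :=
  (128000 / 19683) *
    (12000 * t₁ ^ 3 - 3360 * t₁ * t₂ ^ 2 * Z ^ 2 - 3390 * t₁ * t₂ * t₃ ^ 2
      - 3120 * t₁ * t₂ * t₃ * Z ^ 3 + 810 * t₁ * t₃ ^ 3 * Z + 4112 * t₂ ^ 3 * t₃
      + 2176 * t₂ ^ 3 * Z ^ 3 - 2176 * t₂ ^ 2 * t₃ ^ 2 * Z - 119 * t₂ * t₃ ^ 3 * Z ^ 2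
      + 200 * t₃ ^ 5 + 119 * t₃ ^ 4 * Z ^ 3)

/-- The `H₃` basic invariant `y₂` in the flat coordinates of `(H₃)′`. -/
def y2H31 (t₁ t₂ t₃ Z : ℂ) : ℂ :=
  (3200 / 729) *
    (180 * t₁ * t₂ - 32 * t₂ ^ 2 * Z - 22 * t₂ * t₃ * Z ^ 2 - 5 * t₃ ^ 3 - 5 * t₃ ^ 2 * Z ^ 3)

/-- The `H₃` basic invariant `y₃` in the flat coordinates of `(H₃)′`. -/
def y3H31 (t₁ t₂ t₃ Z : ℂ) : ℂ := (20 / 3) * t₃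

/-! Substituting `t₂ = -(Z⁴ + t₃ Z)` from the quartic, `y₃` determines `t₃`, and `y₂` is affine in
`t₁` with leading coefficient `(3200/729)·180·t₂`, so `t₁` is recovered wherever `t₂ ≠ 0`.
The degree-27 equation is what remains after eliminating `t₁` between `y₂` and `y₁` (cubic in
`t₁`); after the substitution it is a polynomial identity in `t₁, t₃, Z`. -/

def rootEquationH31 (y₁ y₂ y₃ Z : ℂ) : ℂ :=
  (2 : ℂ) ^ 29 * 5 ^ 11 * Z ^ 27
      + 2 ^ 27 * 3 ^ 3 * 5 ^ 10 * y₃ * Z ^ 24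
      + 2 ^ 22 * 3 ^ 4 * 5 ^ 8 * 151 * y₃ ^ 2 * Z ^ 21
      + 2 ^ 18 * 3 ^ 4 * 5 ^ 7 *
          (2 ^ 2 * 7 ^ 2 * 19 * y₃ ^ 3 - 3 ^ 3 * y₂) * Z ^ 18
      + 2 ^ 13 * 3 ^ 6 * 5 ^ 5 *
          (60089 * y₃ ^ 4
            - 2 ^ 2 * 3 ^ 3 * 11 * y₂ * y₃) * Z ^ 15
      + 2 ^ 10 * 3 ^ 7 * 5 ^ 3 *
          (5 ^ 2 * 2 * 11 * 19 * 41 * y₃ ^ 5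
            - 3 ^ 3 * 263 * y₂ * y₃ ^ 2
            + 2 ^ 2 * 3 ^ 7 * y₁) * Z ^ 12
      + 2 ^ 9 * 3 ^ 7 * 5 ^ 2 *
          (2 ^ 3 * 3 ^ 6 * y₂ ^ 2
            + 3 ^ 9 * 2 * y₁ * y₃
            + 3 ^ 3 * 19 * 41 * y₂ * y₃ ^ 3
            + 5 ^ 2 * 2 * 4987 * y₃ ^ 6) * Z ^ 9
      + 2 ^ 6 * 3 ^ 9 * 5 *
          (3 ^ 6 * 7 * y₂ ^ 2 * y₃
            + 2 ^ 2 * 3 ^ 8 * y₁ * y₃ ^ 2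
            + 2 ^ 5 * 3 ^ 3 * 23 * y₂ * y₃ ^ 4
            + 2 ^ 2 * 5 ^ 3 * 53 * y₃ ^ 7) * Z ^ 6
      + 2 ^ 3 * 3 ^ 10 *
          (3 ^ 6 * 5 * y₂ ^ 2 * y₃ ^ 2
            + 2 ^ 3 * 3 ^ 7 * y₁ * y₃ ^ 3
            + 2 ^ 2 * 3 ^ 3 * 131 * y₂ * y₃ ^ 5
            - 2 ^ 2 * 5 ^ 2 * 7 * y₃ ^ 8) * Z ^ 3
      + 3 ^ 9 *
          (3 ^ 9 * y₂ ^ 3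
            + 3 ^ 7 * 2 * y₂ ^ 2 * y₃ ^ 3
            + 2 ^ 2 * 3 ^ 4 * y₂ * y₃ ^ 6
            + 2 ^ 3 * y₃ ^ 9)

section

variable {t₁ t₂ t₃ Z : ℂ}

theorem t₃_eq_y3H31 : t₃ = (3 / 20) * y3H31 t₁ t₂ t₃ Z := by
  rw [y3H31]
  ring

theorem t₂_eq_of_quartic (hP : Z ^ 4 + t₃ * Z + t₂ = 0) :
    t₂ = -(Z / 20) * (20 * Z ^ 3 + 3 * y3H31 t₁ t₂ t₃ Z) := by
  rw [y3H31]
  linear_combination hP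

theorem y2H31_affine_in_t₁ (hP : Z ^ 4 + t₃ * Z + t₂ = 0) :
    28800 * Z * (20 * Z ^ 3 + 3 * y3H31 t₁ t₂ t₃ Z) * t₁ =
      -(102400 * Z ^ 9 + 20160 * y3H31 t₁ t₂ t₃ Z * Z ^ 6
        + 1080 * (y3H31 t₁ t₂ t₃ Z) ^ 2 * Z ^ 3 + 729 * y2H31 t₁ t₂ t₃ Z
        + 54 * (y3H31 t₁ t₂ t₃ Z) ^ 3) := by
  obtain rfl : t₂ = -(Z ^ 4 + t₃ * Z) := by linear_combination hP
  simp only [y2H31, y3H31]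
  ring

theorem t₁_eq_of_quartic (hP : Z ^ 4 + t₃ * Z + t₂ = 0)
    (hne : Z * (20 * Z ^ 3 + 3 * y3H31 t₁ t₂ t₃ Z) ≠ 0) :
    t₁ = -(1 / (28800 * Z * (20 * Z ^ 3 + 3 * y3H31 t₁ t₂ t₃ Z))) *
      (102400 * Z ^ 9 + 20160 * y3H31 t₁ t₂ t₃ Z * Z ^ 6
        + 1080 * (y3H31 t₁ t₂ t₃ Z) ^ 2 * Z ^ 3 + 729 * y2H31 t₁ t₂ t₃ Z
        + 54 * (y3H31 t₁ t₂ t₃ Z) ^ 3) := by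
  have h := y2H31_affine_in_t₁ (t₁ := t₁) hP
  generalize y2H31 t₁ t₂ t₃ Z = y₂ at h ⊢
  generalize y3H31 t₁ t₂ t₃ Z = y₃ at h hne ⊢
  have hden : 28800 * Z * (20 * Z ^ 3 + 3 * y₃) ≠ 0 := by
    rw [mul_assoc]
    exact mul_ne_zero (by norm_num) hne
  rw [neg_mul, one_div_mul_eq_div, ← neg_div, eq_div_iff hden]
  linear_combination h

theorem rootEquationH31_eq_zero (hP : Z ^ 4 + t₃ * Z + t₂ = 0) :
    rootEquationH31 (y1H31 t₁ t₂ t₃ Z) (y2H31 t₁ t₂ t₃ Z) (y3H31 t₁ t₂ t₃ Z) Z = 0 := by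
  obtain rfl : t₂ = -(Z ^ 4 + t₃ * Z) := by linear_combination hP
  simp only [rootEquationH31, y1H31, y2H31, y3H31]
  ring

end

/-- Inversion of the `(H₃)′` formulas: the flat coordinates expressed via the basic
invariants and `Z`, and the degree-27 equation satisfied by `Z`. -/
theorem statement_5 (t₁ t₂ t₃ Z : ℂ) (hP : Z ^ 4 + t₃ * Z + t₂ = 0) :
    t₃ = (3 / 20) * y3H31 t₁ t₂ t₃ Z ∧
    t₂ = -(Z / 20) * (20 * Z ^ 3 + 3 * y3H31 t₁ t₂ t₃ Z) ∧
    (Z * (20 * Z ^ 3 + 3 * y3H31 t₁ t₂ t₃ Z) ≠ 0 →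
      t₁ = -(1 / (28800 * Z * (20 * Z ^ 3 + 3 * y3H31 t₁ t₂ t₃ Z))) *
          (102400 * Z ^ 9 + 20160 * y3H31 t₁ t₂ t₃ Z * Z ^ 6
            + 1080 * (y3H31 t₁ t₂ t₃ Z) ^ 2 * Z ^ 3 + 729 * y2H31 t₁ t₂ t₃ Z
            + 54 * (y3H31 t₁ t₂ t₃ Z) ^ 3) ∧
      (2 : ℂ) ^ 29 * 5 ^ 11 * Z ^ 27
        + 2 ^ 27 * 3 ^ 3 * 5 ^ 10 * y3H31 t₁ t₂ t₃ Z * Z ^ 24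
        + 2 ^ 22 * 3 ^ 4 * 5 ^ 8 * 151 * (y3H31 t₁ t₂ t₃ Z) ^ 2 * Z ^ 21
        + 2 ^ 18 * 3 ^ 4 * 5 ^ 7 *
            (2 ^ 2 * 7 ^ 2 * 19 * (y3H31 t₁ t₂ t₃ Z) ^ 3 - 3 ^ 3 * y2H31 t₁ t₂ t₃ Z) * Z ^ 18
        + 2 ^ 13 * 3 ^ 6 * 5 ^ 5 *
            (60089 * (y3H31 t₁ t₂ t₃ Z) ^ 4
              - 2 ^ 2 * 3 ^ 3 * 11 * y2H31 t₁ t₂ t₃ Z * y3H31 t₁ t₂ t₃ Z) * Z ^ 15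
        + 2 ^ 10 * 3 ^ 7 * 5 ^ 3 *
            (5 ^ 2 * 2 * 11 * 19 * 41 * (y3H31 t₁ t₂ t₃ Z) ^ 5
              - 3 ^ 3 * 263 * y2H31 t₁ t₂ t₃ Z * (y3H31 t₁ t₂ t₃ Z) ^ 2
              + 2 ^ 2 * 3 ^ 7 * y1H31 t₁ t₂ t₃ Z) * Z ^ 12
        + 2 ^ 9 * 3 ^ 7 * 5 ^ 2 *
            (2 ^ 3 * 3 ^ 6 * (y2H31 t₁ t₂ t₃ Z) ^ 2
              + 3 ^ 9 * 2 * y1H31 t₁ t₂ t₃ Z * y3H31 t₁ t₂ t₃ Z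
              + 3 ^ 3 * 19 * 41 * y2H31 t₁ t₂ t₃ Z * (y3H31 t₁ t₂ t₃ Z) ^ 3
              + 5 ^ 2 * 2 * 4987 * (y3H31 t₁ t₂ t₃ Z) ^ 6) * Z ^ 9
        + 2 ^ 6 * 3 ^ 9 * 5 *
            (3 ^ 6 * 7 * (y2H31 t₁ t₂ t₃ Z) ^ 2 * y3H31 t₁ t₂ t₃ Z
              + 2 ^ 2 * 3 ^ 8 * y1H31 t₁ t₂ t₃ Z * (y3H31 t₁ t₂ t₃ Z) ^ 2
              + 2 ^ 5 * 3 ^ 3 * 23 * y2H31 t₁ t₂ t₃ Z * (y3H31 t₁ t₂ t₃ Z) ^ 4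
              + 2 ^ 2 * 5 ^ 3 * 53 * (y3H31 t₁ t₂ t₃ Z) ^ 7) * Z ^ 6
        + 2 ^ 3 * 3 ^ 10 *
            (3 ^ 6 * 5 * (y2H31 t₁ t₂ t₃ Z) ^ 2 * (y3H31 t₁ t₂ t₃ Z) ^ 2
              + 2 ^ 3 * 3 ^ 7 * y1H31 t₁ t₂ t₃ Z * (y3H31 t₁ t₂ t₃ Z) ^ 3
              + 2 ^ 2 * 3 ^ 3 * 131 * y2H31 t₁ t₂ t₃ Z * (y3H31 t₁ t₂ t₃ Z) ^ 5
              - 2 ^ 2 * 5 ^ 2 * 7 * (y3H31 t₁ t₂ t₃ Z) ^ 8) * Z ^ 3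
        + 3 ^ 9 *
            (3 ^ 9 * (y2H31 t₁ t₂ t₃ Z) ^ 3
              + 3 ^ 7 * 2 * (y2H31 t₁ t₂ t₃ Z) ^ 2 * (y3H31 t₁ t₂ t₃ Z) ^ 3
              + 2 ^ 2 * 3 ^ 4 * y2H31 t₁ t₂ t₃ Z * (y3H31 t₁ t₂ t₃ Z) ^ 6
              + 2 ^ 3 * (y3H31 t₁ t₂ t₃ Z) ^ 9) = 0) := by
  have hroot := rootEquationH31_eq_zero (t₁ := t₁) hP
  unfold rootEquationH31 at hroot
  exact ⟨t₃_eq_y3H31, t₂_eq_of_quartic hP, fun hne => ⟨t₁_eq_of_quartic hP hne, hroot⟩⟩
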